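/- arXiv:2104.01127 — 3 statements merged into one kernel-verified Lean document; each statement's English description precedes it below -/
import Mathlib

section
/- (Theorem 2.3.) Let k > 0, α > 0, β > 0, r > 0, K > 0 and δ > 0. Let v : [K, ∞) → ℝ be continuous on [K, ∞), twice differentiable on (K, ∞), and suppose (1/2) k² x³ v''(x) + (α x − β x²) v'(x) − r v(x) = 0 for all x ∈ (K, ∞), v(K) = δ, and v(x) → 0 as x → ∞. Then v(x) < δ for all x ∈ (K, ∞). -/
open Real Filter Set
open Topology


/-- (Theorem 2.3.) Let `k, α, β, r, K, δ > 0`. If `v` is continuous on `[K, ∞)`,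
twice differentiable on `(K, ∞)`, satisfies `ℒv = 0` on `(K, ∞)`, `v(K) = δ`, and
`v(x) → 0` as `x → ∞`, then `v(x) < δ` for all `x ∈ (K, ∞)`. -/
theorem value_below_rebate (k α β r K δ : ℝ) (v : ℝ → ℝ)
    (hk : 0 < k) (hα : 0 < α) (hβ : 0 < β) (hr : 0 < r) (hK : 0 < K) (hδ : 0 < δ)
    (hcont : ContinuousOn v (Ici K))
    (hdiff : ∀ x ∈ Ioi K, DifferentiableAt ℝ v x)
    (hdiff2 : ∀ x ∈ Ioi K, DifferentiableAt ℝ (deriv v) x)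
    (hODE : ∀ x ∈ Ioi K,
      (1 / 2) * k ^ 2 * x ^ 3 * deriv (deriv v) x +
        (α * x - β * x ^ 2) * deriv v x - r * v x = 0)
    (hvK : v K = δ)
    (hlim : Tendsto v atTop (nhds 0)) :
    ∀ x ∈ Ioi K, v x < δ := by
  by_contra hcon
  push_neg at hcon
  obtain ⟨x0, hx0K, hx0⟩ := hcon
  rw [mem_Ioi] at hx0K
  have hev : ∀ᶠ x in atTop, v x < δ := hlim.eventually (eventually_lt_nhds hδ)
  obtain ⟨M0, hM0⟩ := hev.exists_forall_of_atTop
  set M : ℝ := max M0 (x0 + 1) with hM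
  have hx0M : x0 < M := lt_of_lt_of_le (lt_add_one x0) (le_max_right _ _)
  have hKM : K < M := lt_trans hx0K hx0M
  have hvM : v M < δ := hM0 M (le_max_left _ _)
  have hcompact : IsCompact (Icc K M) := isCompact_Icc
  have hcont' : ContinuousOn v (Icc K M) := hcont.mono Icc_subset_Ici_self
  obtain ⟨c0, hc0mem, hc0max⟩ := hcompact.exists_isMaxOn ⟨K, le_refl K, hKM.le⟩ hcont'
  have hx0mem : x0 ∈ Icc K M := ⟨hx0K.le, hx0M.le⟩
  have hδle : δ ≤ v c0 := le_trans hx0 (hc0max hx0mem)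
  obtain ⟨c, hcmem, hcmax, hcK, hcδ⟩ :
      ∃ c ∈ Icc K M, IsMaxOn v (Icc K M) c ∧ K < c ∧ δ ≤ v c := by
    by_cases h : v x0 = v c0
    · refine ⟨x0, hx0mem, ?_, hx0K, hx0⟩
      intro y hy; simp only [mem_setOf_eq]; rw [h]; exact hc0max hy
    · have hlt : v x0 < v c0 := lt_of_le_of_ne (hc0max hx0mem) h
      have hKc0 : K < c0 := by
        rcases lt_or_eq_of_le hc0mem.1 with h' | h'
        · exact h'
        · exfalso; rw [← h', hvK] at hlt; exact absurd hx0 (not_le.mpr hlt)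
      exact ⟨c0, hc0mem, hc0max, hKc0, hδle⟩
  -- c is interior
  have hcM : c < M := by
    rcases lt_or_eq_of_le hcmem.2 with h' | h'
    · exact h'
    · exfalso; rw [h'] at hcδ; exact absurd hcδ (not_le.mpr hvM)
  have hcIoi : c ∈ Ioi K := hcK
  -- local max, so deriv v c = 0
  have hnhds : Icc K M ∈ 𝓝 c := Icc_mem_nhds hcK hcM
  have hlocmax : IsLocalMax v c := hcmax.isLocalMax hnhds
  have hderiv0 : deriv v c = 0 := hlocmax.deriv_eq_zero
  -- ODE gives deriv (deriv v) c > 0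
  have hode := hODE c hcIoi
  rw [hderiv0] at hode
  have hc3 : 0 < c ^ 3 := pow_pos (lt_trans hK hcK) 3
  have hdd : 0 < deriv (deriv v) c := by
    have h1 : (1 / 2) * k ^ 2 * c ^ 3 * deriv (deriv v) c = r * v c := by linarith
    have h2 : 0 < r * v c := mul_pos hr (lt_of_lt_of_le hδ hcδ)
    nlinarith [sq_nonneg k, mul_pos (mul_pos (by positivity : (0:ℝ) < (1/2) * k^2) hc3) (lt_of_le_of_lt (le_of_eq rfl) h2)]
  -- slope of deriv v at c eventually positive to the right
  have hHD : HasDerivAt (deriv v) (deriv (deriv v) c) c := (hdiff2 c hcIoi).hasDerivAt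
  have hslope : Tendsto (slope (deriv v) c) (𝓝[≠] c) (𝓝 (deriv (deriv v) c)) :=
    hasDerivAt_iff_tendsto_slope.mp hHD
  have hslope' : Tendsto (slope (deriv v) c) (𝓝[>] c) (𝓝 (deriv (deriv v) c)) :=
    hslope.mono_left (nhdsWithin_mono c fun y hy => ne_of_gt hy)
  have hev2 : ∀ᶠ y in 𝓝[>] c, 0 < slope (deriv v) c y :=
    hslope'.eventually (eventually_gt_nhds hdd)
  obtain ⟨b, hbc, hIoo⟩ := mem_nhdsGT_iff_exists_Ioo_subset.mp hev2
  rw [mem_Ioi] at hbc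
  -- deriv v > 0 on Ioo c b
  have hpos : ∀ y ∈ Ioo c b, 0 < deriv v y := by
    intro y hy
    have := hIoo hy
    simp only [mem_setOf_eq, slope_def_field, div_pos_iff] at this
    have hs : 0 < slope (deriv v) c y := hIoo hy
    rw [slope_def_field] at hs
    have hyc : 0 < y - c := sub_pos.mpr hy.1
    have := (div_pos_iff).mp hs
    rcases this with ⟨h1, _⟩ | ⟨h1, h2⟩
    · rw [hderiv0, sub_zero] at h1; exact h1
    · exact absurd hyc (not_lt.mpr h2.le)
  -- pick y in (c, min b M)
  set d : ℝ := min b M with hd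
  have hcd : c < d := lt_min hbc hcM
  set y : ℝ := (c + d) / 2 with hy
  have hcy : c < y := by simp [hy]; linarith
  have hyd : y < d := by simp [hy]; linarith
  have hyb : y < b := lt_of_lt_of_le hyd (min_le_left _ _)
  have hyM : y ≤ M := le_of_lt (lt_of_lt_of_le hyd (min_le_right _ _))
  -- v strictly increasing on [c, y]
  have hmono : StrictMonoOn v (Icc c y) := by
    apply strictMonoOn_of_deriv_pos (convex_Icc c y)
    · exact hcont.mono (fun z hz => le_trans hcK.le hz.1)
    · intro z hz
      rw [interior_Icc] at hz
      exact hpos z ⟨hz.1, lt_trans hz.2 hyb⟩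
  have : v c < v y := hmono ⟨le_refl c, hcy.le⟩ ⟨hcy.le, le_refl y⟩ hcy
  have hymem : y ∈ Icc K M := ⟨le_trans hcK.le hcy.le, hyM⟩
  exact absurd (hcmax hymem) (not_le.mpr this)
end

section
/- (Theorem 2.4.) Let k > 0, α > r > 0, β > 0, δ > 0, 0 < s < K, and let d₁ = ((α − r) + √((α − r)² + 4 r (K + δ) β)) / (2β). Assume K ≤ d₁. Let v : [s, K] → ℝ be continuous on [s, K], twice differentiable on (s, K), and satisfy (1/2) k² x³ v''(x) + (α x − β x²) v'(x) − r v(x) = 0 for all x ∈ (s, K), together with v(s) = K − s and v(K) = δ. Then v(x) ≤ K − x + δ for all x ∈ (s, K). -/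
open Real Filter Set
open scoped Topology

set_option maxHeartbeats 1600000 in
/-- (Theorem 2.4.) Let `k > 0`, `α > r > 0`, `β > 0`, `δ > 0`, `0 < s < K`, and
`d₁ = ((α − r) + √((α − r)² + 4 r (K + δ) β)) / (2β)`. Assume `K ≤ d₁`. If `v` is
continuous on `[s, K]`, twice differentiable on `(s, K)`, satisfies `ℒv = 0` on `(s, K)`,
`v(s) = K − s` and `v(K) = δ`, then `v(x) ≤ K − x + δ` for all `x ∈ (s, K)`. -/
theorem value_below_cancellation_payoff (k α β r K s δ d₁ : ℝ) (v : ℝ → ℝ)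
    (hk : 0 < k) (hr : 0 < r) (hrα : r < α) (hβ : 0 < β) (hδ : 0 < δ)
    (hs : 0 < s) (hsK : s < K)
    (hd₁ : d₁ = ((α - r) + Real.sqrt ((α - r) ^ 2 + 4 * r * (K + δ) * β)) / (2 * β))
    (hKd₁ : K ≤ d₁)
    (hcont : ContinuousOn v (Icc s K))
    (hdiff : ∀ x ∈ Ioo s K, DifferentiableAt ℝ v x)
    (hdiff2 : ∀ x ∈ Ioo s K, DifferentiableAt ℝ (deriv v) x)
    (hODE : ∀ x ∈ Ioo s K,
      (1 / 2) * k ^ 2 * x ^ 3 * deriv (deriv v) x +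
        (α * x - β * x ^ 2) * deriv v x - r * v x = 0)
    (hvs : v s = K - s) (hvK : v K = δ) :
    ∀ x ∈ Ioo s K, v x ≤ K - x + δ := by
  intro x hx
  by_contra hcon
  push_neg at hcon
  -- the difference function w = v - g₂
  set w : ℝ → ℝ := fun y => v y + y - (K + δ) with hw
  have hwc : ContinuousOn w (Icc s K) :=
    (hcont.add continuousOn_id).sub continuousOn_const
  -- derivative of w
  have hderivw : ∀ y ∈ Ioo s K, HasDerivAt w (deriv v y + 1) y := by
    intro y hy
    exact (((hdiff y hy).hasDerivAt.add (hasDerivAt_id y)).sub_const (K + δ))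
  -- maximum of w on the compact interval
  obtain ⟨c, hcmem, hcmax⟩ :=
    isCompact_Icc.exists_isMaxOn ⟨s, left_mem_Icc.2 hsK.le⟩ hwc
  have hwx : 0 < w x := by simp only [hw]; linarith
  have hwcpos : 0 < w c := lt_of_lt_of_le hwx (hcmax (mem_Icc_of_Ioo hx))
  have hcs : c ≠ s := by
    intro h
    rw [h] at hwcpos
    simp only [hw, hvs] at hwcpos
    linarith
  have hcK : c ≠ K := by
    intro h
    rw [h] at hwcpos
    simp only [hw, hvK] at hwcpos
    linarith
  have hcIoo : c ∈ Ioo s K :=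
    ⟨lt_of_le_of_ne hcmem.1 (Ne.symm hcs), lt_of_le_of_ne hcmem.2 hcK⟩
  -- first derivative vanishes at the interior maximum
  have hloc : IsLocalMax w c := hcmax.isLocalMax (Icc_mem_nhds hcIoo.1 hcIoo.2)
  have hd0 : deriv v c + 1 = 0 := hloc.hasDerivAt_eq_zero (hderivw c hcIoo)
  have hdvc : deriv v c = -1 := by linarith
  -- second derivative is ≤ 0 at the interior maximum
  have h2 : deriv (deriv v) c ≤ 0 := by
    by_contra hpos
    push_neg at hpos
    have hgd : HasDerivAt (deriv v) (deriv (deriv v) c) c := (hdiff2 c hcIoo).hasDerivAt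
    have hslope := hasDerivAt_iff_tendsto_slope.1 hgd
    have hev : ∀ᶠ y in 𝓝[≠] c, 0 < slope (deriv v) c y :=
      hslope.eventually (eventually_gt_nhds hpos)
    have hev' : ∀ᶠ y in 𝓝[>] c, 0 < slope (deriv v) c y :=
      hev.filter_mono (nhdsWithin_mono c (fun y hy => ne_of_gt hy))
    have hevK : ∀ᶠ y in 𝓝[>] c, y ∈ Ioo c K :=
      eventually_mem_set.2 (Ioo_mem_nhdsGT_of_mem ⟨le_refl c, hcIoo.2⟩)
    obtain ⟨u, hu, hsub⟩ := mem_nhdsGT_iff_exists_Ioo_subset.1 (hev'.and hevK)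
    -- on (c, u) we have deriv v > -1
    have key : ∀ z ∈ Ioo c u, -1 < deriv v z ∧ z < K := by
      intro z hz
      obtain ⟨h1, h2⟩ := hsub hz
      constructor
      · have hzc : 0 < z - c := by linarith [hz.1]
        have : 0 < (deriv v z - deriv v c) / (z - c) := by
          simpa [slope_def_field, div_eq_iff (ne_of_gt hzc)] using h1
        have := (div_pos_iff.1 this)
        rcases this with ⟨hn, _⟩ | ⟨_, hd⟩
        · linarith [hdvc]
        · linarith
      · exact h2.2
    -- pick a point y ∈ (c, u) with y < K
    have huIoi : c < u := hu
    set y := (c + u) / 2 with hy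
    have hyIoo : y ∈ Ioo c u := ⟨by simp only [hy]; linarith, by simp only [hy]; linarith⟩
    have hyK : y < K := (key y hyIoo).2
    have hcy : c < y := hyIoo.1
    -- mean value theorem on [c, y]
    have hwcont : ContinuousOn w (Icc c y) :=
      hwc.mono (Icc_subset_Icc hcIoo.1.le hyK.le)
    have hwdiff : DifferentiableOn ℝ w (Ioo c y) := by
      intro z hz
      have hzIoo : z ∈ Ioo s K := ⟨hcIoo.1.trans hz.1, hz.2.trans hyK⟩
      exact ((hderivw z hzIoo).differentiableAt).differentiableWithinAt
    obtain ⟨ξ, hξ, hξeq⟩ := exists_deriv_eq_slope w hcy hwcont hwdiff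
    have hξIoo : ξ ∈ Ioo s K := ⟨hcIoo.1.trans hξ.1, hξ.2.trans hyK⟩
    have hξu : ξ ∈ Ioo c u := ⟨hξ.1, hξ.2.trans hyIoo.2⟩
    have hderξ : deriv w ξ = deriv v ξ + 1 := (hderivw ξ hξIoo).deriv
    have hpos' : 0 < deriv w ξ := by
      have := (key ξ hξu).1
      rw [hderξ]; linarith
    have hwy : w c < w y := by
      rw [hξeq] at hpos'
      have := mul_pos hpos' (sub_pos.2 hcy)
      rw [div_mul_cancel₀] at this
      · linarith
      · exact ne_of_gt (sub_pos.2 hcy)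
    have : w y ≤ w c := hcmax ⟨hcIoo.1.le.trans hcy.le, hyK.le⟩
    linarith
  -- the ODE at c combined with signs gives a contradiction with the quadratic
  have hode := hODE c hcIoo
  rw [hdvc] at hode
  have hc0 : 0 < c := hs.trans hcIoo.1
  have hvc : K - c + δ < v c := by
    have : 0 < w c := hwcpos
    simp only [hw] at this
    linarith
  -- (1/2) k² c³ v'' ≤ 0
  have hlhs : (1 / 2) * k ^ 2 * c ^ 3 * deriv (deriv v) c ≤ 0 := by
    have hkc : 0 < (1 / 2) * k ^ 2 * c ^ 3 := by positivity
    exact mul_nonpos_of_nonneg_of_nonpos hkc.le h2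
  -- hence β c² - (α - r) c - r (K + δ) > 0
  have hquadpos : 0 < β * c ^ 2 - (α - r) * c - r * (K + δ) := by nlinarith
  -- but the quadratic is negative on (0, d₁)
  have hKδ : 0 < K + δ := by linarith
  obtain ⟨S, hSdef⟩ : ∃ S : ℝ, S = Real.sqrt ((α - r) ^ 2 + 4 * r * (K + δ) * β) := ⟨_, rfl⟩
  have hSpos : 0 ≤ S := hSdef ▸ Real.sqrt_nonneg _
  have hSsq : S ^ 2 = (α - r) ^ 2 + 4 * r * (K + δ) * β := by
    rw [hSdef]; exact Real.sq_sqrt (by positivity)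
  rw [← hSdef] at hd₁
  have hcd₁ : c < d₁ := lt_of_lt_of_le hcIoo.2 hKd₁
  have hclt : 2 * β * c < (α - r) + S := by
    have h2β : 0 < 2 * β := by linarith
    have h := hcd₁
    rw [hd₁, lt_div_iff₀ h2β] at h
    linarith
  have hSgt : α - r < S := by
    nlinarith [mul_pos (mul_pos hr hKδ) hβ]
  have hA : 0 < (α - r) + S - 2 * β * c := by linarith
  have hB : 0 < S + 2 * β * c - (α - r) := by nlinarith [mul_pos hβ hc0]
  nlinarith [mul_pos hA hB, mul_pos hβ hquadpos]
end

section
/- (Theorem 2.5, payoff bound.) Let k > 0, α > 0, β > 0, r > 0, δ > 0, 0 < s < K, and assume 2β x + r − α > 0 for all x ∈ (s, K). Let v be three times differentiable on (s, K), continuous on [s, K] with v' extending continuously to [s, K], satisfying (1/2) k² x³ v''(x) + (α x − β x²) v'(x) − r v(x) = 0 for all x ∈ (s, K), together with v(s) = K − s, v(K) = δ, v'(s) = −1, and v'(K) = a where a > −1. Then v(x) ≤ K − x + δ for all x ∈ (s, K). -/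
open Real Filter Set
open Topology

/- A minimum principle for `v'`: differentiating `ℒv = 0` at an interior minimum `x₀` of `v'`
(where `v'' = 0` and `v''' ≥ 0`) leaves `½ k² x₀³ v'''(x₀) = (2β x₀ + r − α) v'(x₀)`, so the positivity
of `2β x + r − α` forbids negative interior minima. Hence `v' ≥ min(v'(s), v'(K)) = −1` on `[s, K]`,
and the mean value inequality gives `v(x) ≤ v(K) + K − x = K − x + δ`. -/

/-- A negative second derivative would make `x₀` a local maximum as well, so `f` would be locally
constant. -/
theorem IsLocalMin.deriv_deriv_nonneg {f : ℝ → ℝ} {x₀ : ℝ} (h : IsLocalMin f x₀)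
    (hc : ContinuousAt f x₀) : 0 ≤ deriv (deriv f) x₀ := by
  by_contra! hneg
  have hmax := isLocalMax_of_deriv_deriv_neg hneg h.deriv_eq_zero hc
  have hconst : f =ᶠ[𝓝 x₀] fun _ => f x₀ := by
    filter_upwards [h, hmax] with x hmin hmax using le_antisymm hmax hmin
  have hzero : deriv (deriv f) x₀ = 0 := by
    simpa using hconst.deriv.deriv_eq
  exact hneg.ne hzero

theorem ode_deriv_eq_of_deriv_deriv_eq_zero {k α β r x₀ : ℝ} {v : ℝ → ℝ}
    (hODE : ∀ᶠ x in 𝓝 x₀, (1 / 2) * k ^ 2 * x ^ 3 * deriv (deriv v) x +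
      (α * x - β * x ^ 2) * deriv v x - r * v x = 0)
    (hdiff : DifferentiableAt ℝ v x₀) (hdiff2 : DifferentiableAt ℝ (deriv v) x₀)
    (hdiff3 : DifferentiableAt ℝ (deriv (deriv v)) x₀) (hcrit : deriv (deriv v) x₀ = 0) :
    (1 / 2) * k ^ 2 * x₀ ^ 3 * deriv (deriv (deriv v)) x₀ = (2 * β * x₀ + r - α) * deriv v x₀ := by
  have hA : HasDerivAt (fun x : ℝ => (1 / 2) * k ^ 2 * x ^ 3) ((1 / 2) * k ^ 2 * (3 * x₀ ^ 2)) x₀ :=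
    ((hasDerivAt_pow 3 x₀).const_mul ((1 / 2) * k ^ 2)).congr_deriv (by norm_num)
  have hB : HasDerivAt (fun x : ℝ => α * x - β * x ^ 2) (α - β * (2 * x₀)) x₀ :=
    (((hasDerivAt_id x₀).const_mul α).sub ((hasDerivAt_pow 2 x₀).const_mul β)).congr_deriv
      (by norm_num)
  have hL := ((hA.mul hdiff3.hasDerivAt).add (hB.mul hdiff2.hasDerivAt)).sub
    (hdiff.hasDerivAt.const_mul r)
  have hL0 := (hasDerivAt_const x₀ (0 : ℝ)).congr_of_eventuallyEq hODE
  have hzero := hL.unique hL0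
  rw [hcrit] at hzero
  linarith

theorem deriv_nonneg_of_isLocalMin_deriv {k α β r x₀ : ℝ} {v : ℝ → ℝ} (hx₀ : 0 ≤ x₀)
    (hcoef : 0 < 2 * β * x₀ + r - α)
    (hODE : ∀ᶠ x in 𝓝 x₀, (1 / 2) * k ^ 2 * x ^ 3 * deriv (deriv v) x +
      (α * x - β * x ^ 2) * deriv v x - r * v x = 0)
    (hdiff : DifferentiableAt ℝ v x₀) (hdiff2 : DifferentiableAt ℝ (deriv v) x₀)
    (hdiff3 : DifferentiableAt ℝ (deriv (deriv v)) x₀) (hmin : IsLocalMin (deriv v) x₀) :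
    0 ≤ deriv v x₀ := by
  have hv3 : 0 ≤ deriv (deriv (deriv v)) x₀ := hmin.deriv_deriv_nonneg hdiff2.continuousAt
  have hmul := ode_deriv_eq_of_deriv_deriv_eq_zero hODE hdiff hdiff2 hdiff3 hmin.deriv_eq_zero
  refine nonneg_of_mul_nonneg_right ?_ hcoef
  rw [← hmul]
  positivity

theorem ode_minimum_principle {k α β r s K c : ℝ} {v w : ℝ → ℝ} (hs : 0 ≤ s) (hsK : s ≤ K)
    (hcoef : ∀ x ∈ Ioo s K, 0 < 2 * β * x + r - α)
    (hdiff : ∀ x ∈ Ioo s K, DifferentiableAt ℝ v x)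
    (hdiff2 : ∀ x ∈ Ioo s K, DifferentiableAt ℝ (deriv v) x)
    (hdiff3 : ∀ x ∈ Ioo s K, DifferentiableAt ℝ (deriv (deriv v)) x)
    (hODE : ∀ x ∈ Ioo s K,
      (1 / 2) * k ^ 2 * x ^ 3 * deriv (deriv v) x +
        (α * x - β * x ^ 2) * deriv v x - r * v x = 0)
    (hw_cont : ContinuousOn w (Icc s K))
    (hw_eq : ∀ x ∈ Ioo s K, w x = deriv v x)
    (hc : c ≤ 0) (hws : c ≤ w s) (hwK : c ≤ w K) :
    ∀ y ∈ Icc s K, c ≤ w y := by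
  obtain ⟨x₀, hx₀, hmin⟩ := isCompact_Icc.exists_isMinOn (nonempty_Icc.mpr hsK) hw_cont
  suffices h : c ≤ w x₀ from fun y hy => h.trans (hmin hy)
  by_contra! hlt
  have hx₀I : x₀ ∈ Ioo s K := by
    refine ⟨hx₀.1.lt_of_ne ?_, hx₀.2.lt_of_ne ?_⟩ <;> rintro rfl <;> linarith
  have hnhds : Ioo s K ∈ 𝓝 x₀ := Ioo_mem_nhds hx₀I.1 hx₀I.2
  have hlocmin : IsLocalMin (deriv v) x₀ := by
    filter_upwards [hnhds] with x hx
    rw [← hw_eq x hx, ← hw_eq x₀ hx₀I]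
    exact hmin (Ioo_subset_Icc_self hx)
  have hnonneg := deriv_nonneg_of_isLocalMin_deriv (hs.trans hx₀I.1.le) (hcoef x₀ hx₀I)
    (mem_of_superset hnhds hODE) (hdiff x₀ hx₀I) (hdiff2 x₀ hx₀I) (hdiff3 x₀ hx₀I) hlocmin
  linarith [hw_eq x₀ hx₀I]

theorem payoff_bound_general (k α β r s K δ a : ℝ) (v w : ℝ → ℝ)
    (hs : 0 < s) (hsK : s < K)
    (hcoef : ∀ x ∈ Ioo s K, 0 < 2 * β * x + r - α)
    (hv_cont : ContinuousOn v (Icc s K))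
    (hdiff : ∀ x ∈ Ioo s K, DifferentiableAt ℝ v x)
    (hdiff2 : ∀ x ∈ Ioo s K, DifferentiableAt ℝ (deriv v) x)
    (hdiff3 : ∀ x ∈ Ioo s K, DifferentiableAt ℝ (deriv (deriv v)) x)
    (hODE : ∀ x ∈ Ioo s K,
      (1 / 2) * k ^ 2 * x ^ 3 * deriv (deriv v) x +
        (α * x - β * x ^ 2) * deriv v x - r * v x = 0)
    (hw_cont : ContinuousOn w (Icc s K))
    (hw_eq : ∀ x ∈ Ioo s K, w x = deriv v x)
    (hvK : v K = δ)
    (hws : w s = -1) (hwK : w K = a) (ha : -1 < a) :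
    ∀ x ∈ Ioo s K, v x ≤ K - x + δ := by
  have hw := ode_minimum_principle hs.le hsK.le hcoef hdiff hdiff2 hdiff3 hODE hw_cont hw_eq
    (by norm_num) hws.ge (hwK ▸ ha.le)
  intro x hx
  have hsub : Icc x K ⊆ Icc s K := Icc_subset_Icc_left hx.1.le
  have hinterior : ∀ y ∈ interior (Icc x K), y ∈ Ioo s K := by
    rw [interior_Icc]
    exact fun y hy => ⟨hx.1.trans hy.1, hy.2⟩
  have hmvt := (convex_Icc x K).mul_sub_le_image_sub_of_le_deriv (hv_cont.mono hsub)
    (fun y hy => (hdiff y (hinterior y hy)).differentiableWithinAt)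
    (fun y hy => hw_eq y (hinterior y hy) ▸ hw y (Ioo_subset_Icc_self (hinterior y hy)))
    x (left_mem_Icc.mpr hx.2.le) K (right_mem_Icc.mpr hx.2.le) hx.2.le
  linarith

/-- (Theorem 2.5, payoff bound.) Let `k, α, β, r > 0`, `δ > 0`, `0 < s < K`, and suppose
`2β x + r − α > 0` on `(s, K)`. If `v` is three times differentiable on `(s, K)`,
continuous on `[s, K]` with derivative extending continuously to `[s, K]`, satisfies
`ℒv = 0` on `(s, K)`, `v(s) = K − s`, `v(K) = δ`, `v'(s) = −1` and `v'(K) = a > −1`,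
then `v(x) ≤ K − x + δ` for all `x ∈ (s, K)`. -/
theorem payoff_bound (k α β r s K δ a : ℝ) (v w : ℝ → ℝ)
    (hk : 0 < k) (hα : 0 < α) (hβ : 0 < β) (hr : 0 < r) (hδ : 0 < δ)
    (hs : 0 < s) (hsK : s < K)
    (hcoef : ∀ x ∈ Ioo s K, 0 < 2 * β * x + r - α)
    (hv_cont : ContinuousOn v (Icc s K))
    (hdiff : ∀ x ∈ Ioo s K, DifferentiableAt ℝ v x)
    (hdiff2 : ∀ x ∈ Ioo s K, DifferentiableAt ℝ (deriv v) x)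
    (hdiff3 : ∀ x ∈ Ioo s K, DifferentiableAt ℝ (deriv (deriv v)) x)
    (hODE : ∀ x ∈ Ioo s K,
      (1 / 2) * k ^ 2 * x ^ 3 * deriv (deriv v) x +
        (α * x - β * x ^ 2) * deriv v x - r * v x = 0)
    (hw_cont : ContinuousOn w (Icc s K))
    (hw_eq : ∀ x ∈ Ioo s K, w x = deriv v x)
    (hvs : v s = K - s) (hvK : v K = δ)
    (hws : w s = -1) (hwK : w K = a) (ha : -1 < a) :
    ∀ x ∈ Ioo s K, v x ≤ K - x + δ :=
  payoff_bound_general k α β r s K δ a v w hs hsK hcoef hv_cont hdiff hdiff2 hdiff3 hODE hw_cont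
    hw_eq hvK hws hwK ha
end
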